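/- Theorem 1 (finite-valued form, minimality of causal states): let Y⃖, Y⃗ be random variables on a common probability space taking values in finite types. Let S = ε(Y⃖) be a statistic of the past such that Y⃗ and Y⃖ are conditionally independent given S and such that the map sending each value σ of S with P(S = σ) > 0 to the conditional distribution of Y⃗ given S = σ is injective. Let R = ρ(Y⃖) be any statistic of the past such that Y⃗ and Y⃖ are conditionally independent given R. Then H[S | R] = 0 and H[S] ≤ H[R]. -/

import Mathlib

open MeasureTheory Real
open scoped Classical

/-- Probability of an event. -/
noncomputable def pr {Ω : Type*} [MeasurableSpace Ω] (μ : Measure Ω) (A : Set Ω) : ℝ :=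
  (μ A).toReal

/-- Conditional probability of `A` given `B`. -/
noncomputable def cpr {Ω : Type*} [MeasurableSpace Ω] (μ : Measure Ω) (A B : Set Ω) : ℝ :=
  pr μ (A ∩ B) / pr μ B

/-- `X` and `W` are conditionally independent given `Z` (finite-valued form):
for all values, `P(X = x ∧ W = w ∧ Z = z) ⬝ P(Z = z) = P(X = x ∧ Z = z) ⬝ P(W = w ∧ Z = z)`. -/
def CondIndepGiven {Ω α β γ : Type*} [MeasurableSpace Ω] (μ : Measure Ω)
    (X : Ω → α) (Z : Ω → γ) (W : Ω → β) : Prop :=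
  ∀ (x : α) (z : γ) (w : β),
    pr μ {ω | X ω = x ∧ W ω = w ∧ Z ω = z} * pr μ {ω | Z ω = z} =
      pr μ {ω | X ω = x ∧ Z ω = z} * pr μ {ω | W ω = w ∧ Z ω = z}

/-- Shannon entropy (in nats) of a finite-valued random variable. -/
noncomputable def ent {Ω α : Type*} [MeasurableSpace Ω] [Fintype α]
    (μ : Measure Ω) (X : Ω → α) : ℝ :=
  -∑ x, pr μ {ω | X ω = x} * Real.log (pr μ {ω | X ω = x})

/-- Shannon entropy of the conditional distribution of `X` given the event `E`. -/
noncomputable def condEntEvent {Ω α : Type*} [MeasurableSpace Ω] [Fintype α]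
    (μ : Measure Ω) (X : Ω → α) (E : Set Ω) : ℝ :=
  -∑ x, cpr μ {ω | X ω = x} E * Real.log (cpr μ {ω | X ω = x} E)

/-- Conditional Shannon entropy `H[X | Y]` of finite-valued random variables. -/
noncomputable def condEnt {Ω α β : Type*} [MeasurableSpace Ω] [Fintype α] [Fintype β]
    (μ : Measure Ω) (X : Ω → α) (Y : Ω → β) : ℝ :=
  ∑ y, pr μ {ω | Y ω = y} * condEntEvent μ X {ω | Y ω = y}

/-- Mutual information `I[X ; Y] = H[X] - H[X | Y]`. -/
noncomputable def mutInfo {Ω α β : Type*} [MeasurableSpace Ω] [Fintype α] [Fintype β]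
    (μ : Measure Ω) (X : Ω → α) (Y : Ω → β) : ℝ :=
  ent μ X - condEnt μ X Y

/-!
Sufficiency of a statistic `f (Y⃖)` says that conditioning the future on `f (Y⃖) = f a` is the
same as conditioning it on `Y⃖ = a`, for every past `a` of positive probability. Applying this to
both `R` and `S`, two such pasts with the same `R`-value give their `S`-values the same conditional
future distribution, so by injectivity they have the same `S`-value. Hence `S = g ∘ R` almost
surely, and a function of `R` has zero entropy given `R` and no more entropy than `R`.
-/

open Function Filter

section Probability

variable {Ω : Type*} [MeasurableSpace Ω] {μ : Measure Ω}

lemma pr_nonneg (μ : Measure Ω) (E : Set Ω) : 0 ≤ pr μ E := ENNReal.toReal_nonneg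

lemma pr_mono [IsFiniteMeasure μ] {E F : Set Ω} (h : E ⊆ F) : pr μ E ≤ pr μ F :=
  ENNReal.toReal_mono (measure_ne_top μ F) (measure_mono h)

lemma pr_eq_zero_iff [IsFiniteMeasure μ] {E : Set Ω} : pr μ E = 0 ↔ μ E = 0 :=
  (ENNReal.toReal_eq_zero_iff _).trans (or_iff_left (measure_ne_top μ E))

lemma pr_congr_ae {E F : Set Ω} (h : E =ᵐ[μ] F) : pr μ E = pr μ F := by
  rw [pr, pr, measure_congr h]

lemma pr_comp_eq_sum [IsFiniteMeasure μ] {C D : Type*} [Fintype D] {Y : Ω → D}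
    (hY : ∀ d, MeasurableSet {ω | Y ω = d}) (g : D → C) (c : C) :
    pr μ {ω | g (Y ω) = c} = ∑ d with g d = c, pr μ {ω | Y ω = d} := by
  have hfiber : {ω | g (Y ω) = c} = Y ⁻¹' ↑({d | g d = c} : Finset D) := by
    ext ω
    simp
  rw [pr, hfiber, ← sum_measure_preimage_singleton _ fun d _ => hY d,
    ENNReal.toReal_sum fun d _ => measure_ne_top μ _]
  rfl

lemma ae_pos_pr_fiber [IsFiniteMeasure μ] {A : Type*} [Countable A] (Y : Ω → A) :
    ∀ᵐ ω ∂μ, 0 < pr μ {ω' | Y ω' = Y ω} := by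
  rw [ae_iff]
  refine measure_mono_null (t := ⋃ a ∈ {a | pr μ {ω | Y ω = a} = 0}, {ω | Y ω = a}) ?_
    ((measure_biUnion_null_iff (Set.to_countable _)).2 fun a ha => pr_eq_zero_iff.1 ha)
  intro ω hω
  exact Set.mem_biUnion (x := Y ω) ((not_lt.1 hω).antisymm (pr_nonneg μ _)) rfl

lemma fiber_ae_eq {C : Type*} {X X' : Ω → C} (h : X =ᵐ[μ] X') (c : C) :
    {ω | X ω = c} =ᵐ[μ] {ω | X' ω = c} :=
  h.mono fun ω (hω : X ω = X' ω) => show (X ω = c) = (X' ω = c) by rw [hω]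

end Probability

section Sufficiency

variable {Ω A B C D : Type*} [MeasurableSpace Ω] {μ : Measure Ω} [IsFiniteMeasure μ]
  {Ypast : Ω → A} {Yfut : Ω → B}

lemma CondIndepGiven.cpr_fiber_eq {f : A → C}
    (hf : CondIndepGiven μ Yfut (fun ω => f (Ypast ω)) Ypast) {a : A}
    (ha : 0 < pr μ {ω | Ypast ω = a}) (y : B) :
    cpr μ {ω | Yfut ω = y} {ω | f (Ypast ω) = f a} =
      cpr μ {ω | Yfut ω = y} {ω | Ypast ω = a} := by
  have hfiber : ∀ ω, (Ypast ω = a ∧ f (Ypast ω) = f a) ↔ Ypast ω = a :=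
    fun ω => and_iff_left_of_imp (congrArg f)
  have h := hf y (f a) a
  simp only [hfiber] at h
  have hfa : 0 < pr μ {ω | f (Ypast ω) = f a} := ha.trans_le (pr_mono fun ω => congrArg f)
  rw [cpr, cpr, div_eq_div_iff hfa.ne' ha.ne']
  exact h.symm

theorem factorsThrough_of_condIndepGiven {ε : A → C} {ρ : A → D}
    (hSsuff : CondIndepGiven μ Yfut (fun ω => ε (Ypast ω)) Ypast)
    (hinj : ∀ σ σ' : C,
      0 < pr μ {ω | ε (Ypast ω) = σ} → 0 < pr μ {ω | ε (Ypast ω) = σ'} →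
      (∀ y : B, cpr μ {ω | Yfut ω = y} {ω | ε (Ypast ω) = σ} =
        cpr μ {ω | Yfut ω = y} {ω | ε (Ypast ω) = σ'}) → σ = σ')
    (hRsuff : CondIndepGiven μ Yfut (fun ω => ρ (Ypast ω)) Ypast) :
    FactorsThrough (fun a : {a // 0 < pr μ {ω | Ypast ω = a}} => ε a) (fun a => ρ a) := by
  rintro ⟨a, ha⟩ ⟨a', ha'⟩ (hρ : ρ a = ρ a')
  have hε : ∀ {a}, 0 < pr μ {ω | Ypast ω = a} → 0 < pr μ {ω | ε (Ypast ω) = ε a} :=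
    fun ha => ha.trans_le (pr_mono fun ω => congrArg ε)
  refine hinj _ _ (hε ha) (hε ha') fun y => ?_
  rw [hSsuff.cpr_fiber_eq ha, hSsuff.cpr_fiber_eq ha', ← hRsuff.cpr_fiber_eq ha,
    ← hRsuff.cpr_fiber_eq ha', hρ]

lemma exists_ae_eq_comp_of_factorsThrough [Countable A] [Nonempty A] {ε : A → C} {ρ : A → D}
    (h : FactorsThrough (fun a : {a // 0 < pr μ {ω | Ypast ω = a}} => ε a) (fun a => ρ a)) :
    ∃ g : D → C, (fun ω => ε (Ypast ω)) =ᵐ[μ] fun ω => g (ρ (Ypast ω)) :=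
  ⟨extend _ _ fun _ => ε (Classical.arbitrary A),
    (ae_pos_pr_fiber Ypast).mono fun ω hω => (h.extend_apply _ ⟨Ypast ω, hω⟩).symm⟩

end Sufficiency

lemma Real.sum_mul_log_le_sum_mul_log_sum {ι : Type*} (s : Finset ι) {x : ι → ℝ}
    (hx : ∀ i ∈ s, 0 ≤ x i) :
    ∑ i ∈ s, x i * log (x i) ≤ (∑ i ∈ s, x i) * log (∑ i ∈ s, x i) := by
  rw [Finset.sum_mul]
  refine Finset.sum_le_sum fun i hi => ?_
  rcases (hx i hi).eq_or_lt with hxi | hxi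
  · simp [← hxi]
  · exact mul_le_mul_of_nonneg_left
      (log_le_log hxi (Finset.single_le_sum hx hi)) hxi.le

section Entropy

variable {Ω C D : Type*} [MeasurableSpace Ω] {μ : Measure Ω} [Fintype C] [Fintype D]

lemma ent_congr_ae {X X' : Ω → C} (h : X =ᵐ[μ] X') : ent μ X = ent μ X' := by
  simp only [ent, pr_congr_ae (fiber_ae_eq h _)]

lemma condEnt_congr_ae {X X' : Ω → C} (h : X =ᵐ[μ] X') (Y : Ω → D) :
    condEnt μ X Y = condEnt μ X' Y := by
  have hjoint : ∀ c d, pr μ ({ω | X ω = c} ∩ {ω | Y ω = d}) =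
      pr μ ({ω | X' ω = c} ∩ {ω | Y ω = d}) :=
    fun c d => pr_congr_ae ((fiber_ae_eq h c).inter (EventuallyEq.refl _ _))
  simp only [condEnt, condEntEvent, cpr, hjoint]

lemma condEnt_comp_self (g : D → C) (Y : Ω → D) : condEnt μ (fun ω => g (Y ω)) Y = 0 := by
  refine Finset.sum_eq_zero fun d _ => mul_eq_zero_of_right _ ?_
  refine neg_eq_zero.2 (Finset.sum_eq_zero fun c _ => ?_)
  by_cases hc : g d = c
  · have hfiber : {ω | g (Y ω) = c} ∩ {ω | Y ω = d} = {ω | Y ω = d} := by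
      ext ω
      simp only [Set.mem_inter_iff, Set.mem_ofPred_eq, and_iff_right_iff_imp]
      rintro rfl
      exact hc
    rw [cpr, hfiber]
    -- `p / p` is `1`, or the junk value `0` on a null fiber; `x * log x` vanishes at both.
    by_cases hd : pr μ {ω | Y ω = d} = 0 <;> simp [hd]
  · have hfiber : {ω | g (Y ω) = c} ∩ {ω | Y ω = d} = ∅ := by
      ext ω
      simp only [Set.mem_inter_iff, Set.mem_ofPred_eq, Set.mem_empty_iff_false, iff_false]
      rintro ⟨hω, rfl⟩
      exact hc hω
    simp [cpr, hfiber, pr]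

lemma ent_comp_le [IsFiniteMeasure μ] {Y : Ω → D} (hY : ∀ d, MeasurableSet {ω | Y ω = d})
    (g : D → C) : ent μ (fun ω => g (Y ω)) ≤ ent μ Y := by
  simp only [ent, neg_le_neg_iff, pr_comp_eq_sum hY]
  rw [← Finset.sum_fiberwise Finset.univ g]
  exact Finset.sum_le_sum fun c _ =>
    Real.sum_mul_log_le_sum_mul_log_sum _ fun d _ => pr_nonneg μ _

end Entropy

theorem causal_states_minimal_sufficient_general
    {Ω A B C D : Type*} [MeasurableSpace Ω]
    [MeasurableSpace A] [DiscreteMeasurableSpace A] [Fintype A] [Nonempty A]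
    [Fintype C]
    [Fintype D]
    (μ : Measure Ω) [IsProbabilityMeasure μ]
    (Ypast : Ω → A) (Yfut : Ω → B) (hYpast : Measurable Ypast)
    (ε : A → C) (ρ : A → D)
    (hSsuff : CondIndepGiven μ Yfut (fun ω => ε (Ypast ω)) Ypast)
    (hinj : ∀ σ σ' : C,
      0 < pr μ {ω | ε (Ypast ω) = σ} → 0 < pr μ {ω | ε (Ypast ω) = σ'} →
      (∀ y : B, cpr μ {ω | Yfut ω = y} {ω | ε (Ypast ω) = σ} =
        cpr μ {ω | Yfut ω = y} {ω | ε (Ypast ω) = σ'}) → σ = σ')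
    (hRsuff : CondIndepGiven μ Yfut (fun ω => ρ (Ypast ω)) Ypast) :
    condEnt μ (fun ω => ε (Ypast ω)) (fun ω => ρ (Ypast ω)) = 0 ∧
      ent μ (fun ω => ε (Ypast ω)) ≤ ent μ (fun ω => ρ (Ypast ω)) := by
  obtain ⟨g, hSR⟩ := exists_ae_eq_comp_of_factorsThrough
    (factorsThrough_of_condIndepGiven hSsuff hinj hRsuff)
  rw [condEnt_congr_ae hSR, ent_congr_ae hSR]
  have hR : ∀ d, MeasurableSet {ω | ρ (Ypast ω) = d} :=
    fun d => hYpast (.of_discrete (s := {a | ρ a = d}))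
  exact ⟨condEnt_comp_self g _, ent_comp_le hR g⟩

/-- Theorem 1, finite-valued form: minimality of causal states.
Let `S = ε ∘ Ypast` be a sufficient statistic of the past for the future (`Yfut` and `Ypast`
conditionally independent given `S`) whose values of positive probability have pairwise distinct
conditional future distributions, and let `R = ρ ∘ Ypast` be any other sufficient statistic.
Then `H[S | R] = 0` and `H[S] ≤ H[R]`. -/
theorem causal_states_minimal_sufficient
    {Ω A B C D : Type*} [MeasurableSpace Ω]
    [MeasurableSpace A] [DiscreteMeasurableSpace A] [Fintype A] [Nonempty A]
    [MeasurableSpace B] [DiscreteMeasurableSpace B] [Fintype B] [Nonempty B]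
    [MeasurableSpace C] [DiscreteMeasurableSpace C] [Fintype C] [Nonempty C]
    [MeasurableSpace D] [DiscreteMeasurableSpace D] [Fintype D] [Nonempty D]
    (μ : Measure Ω) [IsProbabilityMeasure μ]
    (Ypast : Ω → A) (Yfut : Ω → B) (hYpast : Measurable Ypast) (hYfut : Measurable Yfut)
    (ε : A → C) (ρ : A → D)
    (hSsuff : CondIndepGiven μ Yfut (fun ω => ε (Ypast ω)) Ypast)
    (hinj : ∀ σ σ' : C,
      0 < pr μ {ω | ε (Ypast ω) = σ} → 0 < pr μ {ω | ε (Ypast ω) = σ'} →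
      (∀ y : B, cpr μ {ω | Yfut ω = y} {ω | ε (Ypast ω) = σ} =
        cpr μ {ω | Yfut ω = y} {ω | ε (Ypast ω) = σ'}) → σ = σ')
    (hRsuff : CondIndepGiven μ Yfut (fun ω => ρ (Ypast ω)) Ypast) :
    condEnt μ (fun ω => ε (Ypast ω)) (fun ω => ρ (Ypast ω)) = 0 ∧
      ent μ (fun ω => ε (Ypast ω)) ≤ ent μ (fun ω => ρ (Ypast ω)) :=
  causal_states_minimal_sufficient_general μ Ypast Yfut hYpast ε ρ hSsuff hinj hRsuff
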